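/- Let R be a commutative ring with 0 ≠ 1 and let A be a rook matrix of size l × k over R. Then there exist a permutation matrix S of size k × k and a rook matrix P of size l × k in pseudo-echelon form such that A = P * S, and moreover P has exactly the same zero rows and exactly the same zero columns as A. -/

import Mathlib

/-- A rook matrix: every entry is 0 or 1, and there is at most one entry
equal to 1 in each row and in each column. -/
def IsRookMatrix {l k : ℕ} {R : Type*} [CommRing R]
    (A : Matrix (Fin l) (Fin k) R) : Prop :=
  (∀ i j, A i j = 0 ∨ A i j = 1) ∧
  (∀ i j j', A i j = 1 → A i j' = 1 → j = j') ∧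
  (∀ i i' j, A i j = 1 → A i' j = 1 → i = i')

/-- Pseudo-echelon form: if rows `i < i'` contain nonzero entries in columns
`j` and `j'` respectively, then `j < j'`. -/
def IsPseudoEchelon {l k : ℕ} {R : Type*} [CommRing R]
    (A : Matrix (Fin l) (Fin k) R) : Prop :=
  ∀ i i' j j', i < i' → A i j ≠ 0 → A i' j' ≠ 0 → j < j'

/-- A permutation matrix: the 0–1 matrix of some permutation `σ`, with
entry 1 exactly in the positions `(σ j, j)`. -/
def IsPermMatrix {n : ℕ} {R : Type*} [CommRing R]
    (S : Matrix (Fin n) (Fin n) R) : Prop :=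
  ∃ σ : Equiv.Perm (Fin n), ∀ i j, S i j = if i = σ j then 1 else 0

/-- The matrix `[f]` associated to a partial equivalence (rook diagram)
`f : PEquiv (Fin k) (Fin l)`: the `(q, p)` entry is 1 if `f p = q` and 0
otherwise. -/
def rookMatrixOf {k l : ℕ} (R : Type*) [CommRing R]
    (f : PEquiv (Fin k) (Fin l)) : Matrix (Fin l) (Fin k) R :=
  fun q p => if f p = some q then 1 else 0

/-- A partial equivalence (rook diagram) is monotone (planar) if for all
`p, q` in its domain, `p < q` implies `f p < f q`. -/
def IsMonotonePE {k l : ℕ} (f : PEquiv (Fin k) (Fin l)) : Prop :=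
  ∀ p q i j, i ∈ f p → j ∈ f q → p < q → i < j

/-! A rook matrix is the matrix of an injective partial map from rows to columns. Permute the
occupied columns among themselves so that the column of the `r`-th occupied row becomes the
`r`-th occupied column. This makes the map increasing and keeps the zero columns in place;
the permutation matrix `S` undoes the permutation. -/

open Function Set

theorem Function.Injective.exists_perm_strictMono_comp {ι α : Type*} [LinearOrder ι] [Finite ι]
    [LinearOrder α] {c : ι → α} (hc : Injective c) :
    ∃ σ : Equiv.Perm α, (∀ a, σ a ∈ range c ↔ a ∈ range c) ∧ StrictMono (σ ∘ c) := by
  classical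
  have := Fintype.ofFinite ι
  let g : ι ≃o range c := (Fintype.orderIsoFinOfCardEq ι rfl).symm.trans
    (Fintype.orderIsoFinOfCardEq (range c) (Fintype.card_congr (Equiv.ofInjective c hc)).symm)
  refine ⟨Equiv.Perm.ofSubtype ((Equiv.ofInjective c hc).symm.trans g.toEquiv),
    Equiv.Perm.ofSubtype_apply_mem_iff_mem _, fun i j hij => ?_⟩
  simp only [comp_apply, Equiv.Perm.ofSubtype_apply_of_mem _ (mem_range_self _),
    Equiv.trans_apply, Equiv.ofInjective_symm_apply]
  exact g.strictMono hij

noncomputable def rookCol {l k : ℕ} {R : Type*} [CommRing R] (A : Matrix (Fin l) (Fin k) R)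
    (i : {i // ∃ j, A i j = 1}) : Fin k :=
  i.2.choose

theorem apply_rookCol {l k : ℕ} {R : Type*} [CommRing R] {A : Matrix (Fin l) (Fin k) R}
    (i : {i // ∃ j, A i j = 1}) : A i (rookCol A i) = 1 :=
  i.2.choose_spec

namespace IsRookMatrix

variable {l k : ℕ} {R : Type*} [CommRing R] {A : Matrix (Fin l) (Fin k) R}

theorem submatrix {l' k' : ℕ} (hA : IsRookMatrix A) {e : Fin l' → Fin l} {f : Fin k' → Fin k}
    (he : Injective e) (hf : Injective f) : IsRookMatrix (A.submatrix e f) :=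
  ⟨fun i j => hA.1 (e i) (f j), fun i _ _ h h' => hf (hA.2.1 (e i) _ _ h h'),
    fun _ _ j h h' => he (hA.2.2 _ _ (f j) h h')⟩

theorem eq_one_of_ne_zero (hA : IsRookMatrix A) {i j} (h : A i j ≠ 0) : A i j = 1 :=
  (hA.1 i j).resolve_left h

theorem rookCol_eq (hA : IsRookMatrix A) {i j} (h : A i j = 1) : rookCol A ⟨i, j, h⟩ = j :=
  hA.2.1 _ _ _ (apply_rookCol _) h

theorem rookCol_injective (hA : IsRookMatrix A) : Injective (rookCol A) := fun i i' h =>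
  Subtype.ext (hA.2.2 i i' _ (apply_rookCol i) (h ▸ apply_rookCol i'))

theorem col_eq_zero_iff_notMem_range_rookCol [Nontrivial R] (hA : IsRookMatrix A) (j : Fin k) :
    (∀ i, A i j = 0) ↔ j ∉ range (rookCol A) := by
  constructor
  · rintro h ⟨i, rfl⟩
    exact one_ne_zero ((apply_rookCol i).symm.trans (h i))
  · intro h i
    by_contra hi
    exact h ⟨_, hA.rookCol_eq (hA.eq_one_of_ne_zero hi)⟩

end IsRookMatrix

theorem rookMatrix_eq_pseudoEchelon_mul_perm {l k : ℕ} {R : Type*} [CommRing R]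
    [Nontrivial R] (A : Matrix (Fin l) (Fin k) R) (hA : IsRookMatrix A) :
    ∃ (S : Matrix (Fin k) (Fin k) R) (P : Matrix (Fin l) (Fin k) R),
      IsPermMatrix S ∧ IsRookMatrix P ∧ IsPseudoEchelon P ∧ A = P * S ∧
      (∀ i, (∀ j, P i j = 0) ↔ (∀ j, A i j = 0)) ∧
      (∀ j, (∀ i, P i j = 0) ↔ (∀ i, A i j = 0)) := by
  obtain ⟨σ, hσ_range, hσ_mono⟩ := hA.rookCol_injective.exists_perm_strictMono_comp
  refine ⟨(1 : Matrix (Fin k) (Fin k) R).submatrix id σ, A.submatrix id σ.symm,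
    ⟨σ, fun i j => Matrix.one_apply⟩, hA.submatrix injective_id σ.symm.injective, ?_, ?_,
    fun i => σ.symm.forall_congr_right (q := fun j => A i j = 0), fun j => ?_⟩
  · intro i i' j j' hii' (h : A i (σ.symm j) ≠ 0) (h' : A i' (σ.symm j') ≠ 0)
    replace h := hA.eq_one_of_ne_zero h
    replace h' := hA.eq_one_of_ne_zero h'
    simpa only [comp_apply, hA.rookCol_eq h, hA.rookCol_eq h', Equiv.apply_symm_apply] using
      hσ_mono (a := ⟨i, _, h⟩) (b := ⟨i', _, h'⟩) hii'
  · ext i j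
    simp [Matrix.mul_apply, Matrix.one_apply]
  · change (∀ i, A i (σ.symm j) = 0) ↔ _
    rw [hA.col_eq_zero_iff_notMem_range_rookCol, hA.col_eq_zero_iff_notMem_range_rookCol,
      ← hσ_range, σ.apply_symm_apply]
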